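/- Let n ≥ 1, m ∈ ℤ, let Ω ⊆ ℝ^n be open with coordinates (t_1,…,t_n), and let λ, μ : Ω → ℝ^n be smooth maps such that the entries of λ(t) are pairwise distinct and nonzero for every t ∈ Ω. Suppose that λ and μ satisfy the spatial parts of all n Stäckel Hamiltonian systems: ∂λ_j/∂t_i = 2 · (−∂q_i/∂λ_j)(λ) · (λ_j^m/Δ_j(λ)) · μ_j for all i, j ∈ {1,…,n}. Then λ satisfies all n−1 Killing systems with t_1 playing the role of the space variable: ∂λ_j/∂t_i = −(∂q_i/∂λ_j)(λ) · ∂λ_j/∂t_1 for all i = 2,…,n and j = 1,…,n. -/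
import Mathlib


noncomputable section

/-- Viète polynomial `q_i(λ) = (-1)^i e_i(λ)`; by convention `q_0 = 1` and `q_i = 0` for `i > n`. -/
def viete {n : ℕ} (i : ℕ) (lam : Fin n → ℝ) : ℝ :=
  (-1 : ℝ) ^ i * ∑ s ∈ Finset.powersetCard i (Finset.univ : Finset (Fin n)), ∏ j ∈ s, lam j

/-- The partial derivative `∂q_i/∂λ_j` of the `i`-th Viète polynomial. -/
def vieteD {n : ℕ} (i : ℕ) (lam : Fin n → ℝ) (j : Fin n) : ℝ :=
  fderiv ℝ (viete i) lam (Pi.single j 1)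

/-- `Δ_j(λ) = ∏_{s ≠ j} (λ_j - λ_s)`. -/
def Delta {n : ℕ} (lam : Fin n → ℝ) (j : Fin n) : ℝ :=
  ∏ s ∈ Finset.univ.erase j, (lam j - lam s)

lemma viete_one {n : ℕ} : (viete 1 : (Fin n → ℝ) → ℝ) = fun l => -∑ j, l j := by
  funext l
  simp [viete, Finset.powersetCard_one, Finset.sum_map]

lemma vieteD_one {n : ℕ} (lam : Fin n → ℝ) (j : Fin n) : vieteD 1 lam j = -1 := by
  have h : HasFDerivAt (viete 1 : (Fin n → ℝ) → ℝ)
      (-(∑ k, ContinuousLinearMap.proj k : (Fin n → ℝ) →L[ℝ] ℝ)) lam := by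
    rw [viete_one]
    have : HasFDerivAt (fun l : Fin n → ℝ => ∑ j, l j)
        (∑ k, ContinuousLinearMap.proj k : (Fin n → ℝ) →L[ℝ] ℝ) lam := by
      have := (∑ k, ContinuousLinearMap.proj k : (Fin n → ℝ) →L[ℝ] ℝ).hasFDerivAt (x := lam)
      convert this using 1
      funext l
      simp
    exact this.neg
  rw [vieteD, h.fderiv]
  simp [Pi.single_apply, Finset.sum_ite_eq']

theorem stackel_solutions_solve_killing (n : ℕ) (hn : 1 ≤ n) (m : ℤ)
    (Ω : Set (Fin n → ℝ)) (hΩ : IsOpen Ω)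
    (lam mu : (Fin n → ℝ) → Fin n → ℝ)
    (hlam : ContDiffOn ℝ (⊤ : ℕ∞) lam Ω) (hmu : ContDiffOn ℝ (⊤ : ℕ∞) mu Ω)
    (hdist : ∀ t ∈ Ω, Function.Injective (lam t))
    (h0 : ∀ t ∈ Ω, ∀ j, lam t j ≠ 0)
    (hH : ∀ t ∈ Ω, ∀ i j : Fin n,
      fderiv ℝ (fun s => lam s j) t (Pi.single i 1) =
        2 * (-vieteD ((i : ℕ) + 1) (lam t) j) * (lam t j ^ m / Delta (lam t) j) * mu t j) :
    ∀ t ∈ Ω, ∀ i : Fin n, 1 ≤ (i : ℕ) → ∀ j : Fin n,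
      fderiv ℝ (fun s => lam s j) t (Pi.single i 1) =
        -vieteD ((i : ℕ) + 1) (lam t) j *
          fderiv ℝ (fun s => lam s j) t (Pi.single (⟨0, hn⟩ : Fin n) 1) := by
  intro t ht i hi j
  rw [hH t ht i j, hH t ht ⟨0, hn⟩ j]
  have h1 : ((⟨0, hn⟩ : Fin n) : ℕ) + 1 = 1 := rfl
  rw [h1, vieteD_one]
  ring
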